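/- Let c = (c_1, …, c_n) ∈ ℝ^n have positive entries arranged in descending order, c_1 ≥ c_2 ≥ … ≥ c_n > 0, and let ‖·‖_c be the c-norm on B(H). Then ‖·‖_c is submultiplicative (‖AB‖_c ≤ ‖A‖_c · ‖B‖_c for all A, B ∈ B(H)) if and only if c_1 ≥ 1. -/
import Mathlib


open scoped InnerProductSpace

variable {H : Type*} [NormedAddCommGroup H] [InnerProductSpace ℂ H] [CompleteSpace H]

/-- The `k`-th singular value (1-indexed) of a bounded operator `A`:
`s_k(A) = inf {‖A - X‖ : rank X < k}`. -/
noncomputable def sval (k : ℕ) (A : H →L[ℂ] H) : ℝ :=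
  sInf { r : ℝ | ∃ X : H →L[ℂ] H,
    Module.rank ℂ (LinearMap.range (X : H →ₗ[ℂ] H)) < (k : Cardinal) ∧ r = ‖A - X‖ }

/-- `f : ℝ^n → ℝ` is a symmetric norm: a norm invariant under permutations of the
coordinates and under sign changes of the coordinates. -/
structure IsSymmetricNorm (n : ℕ) (f : (Fin n → ℝ) → ℝ) : Prop where
  triangle : ∀ x y, f (x + y) ≤ f x + f y
  homog : ∀ (t : ℝ) (x), f (t • x) = |t| * f x
  definite : ∀ x, x ≠ 0 → 0 < f x
  perm_invariant : ∀ (σ : Equiv.Perm (Fin n)) (x), f (fun i => x (σ i)) = f x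
  sign_invariant : ∀ (ε : Fin n → ℝ), (∀ i, ε i = 1 ∨ ε i = -1) →
    ∀ x, f (fun i => ε i * x i) = f x

/-- The unitarily invariant norm induced by a symmetric norm `f` on `ℝ^n`:
`‖A‖_f = f (s_1(A), …, s_n(A))`. -/
noncomputable def normf (n : ℕ) (f : (Fin n → ℝ) → ℝ) (A : H →L[ℂ] H) : ℝ :=
  f (fun j : Fin n => sval (j.1 + 1) A)

/-- The `c`-norm `‖A‖_c = Σ_j c_j s_j(A)`. -/
noncomputable def cnorm (n : ℕ) (c : Fin n → ℝ) (A : H →L[ℂ] H) : ℝ :=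
  ∑ j : Fin n, c j * sval (j.1 + 1) A

set_option linter.unusedSectionVars false

lemma svalSet_def (k : ℕ) (A : H →L[ℂ] H) : sval k A =
    sInf { r : ℝ | ∃ X : H →L[ℂ] H,
    Module.rank ℂ (LinearMap.range (X : H →ₗ[ℂ] H)) < (k : Cardinal) ∧ r = ‖A - X‖ } := rfl

lemma norm_mem_svalSet (k : ℕ) (hk : 0 < k) (A : H →L[ℂ] H) :
    ‖A‖ ∈ { r : ℝ | ∃ X : H →L[ℂ] H,
    Module.rank ℂ (LinearMap.range (X : H →ₗ[ℂ] H)) < (k : Cardinal) ∧ r = ‖A - X‖ } := by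
  refine ⟨0, ?_, by simp⟩
  have : LinearMap.range ((0 : H →L[ℂ] H) : H →ₗ[ℂ] H) = ⊥ := by simp
  rw [this, rank_bot]
  exact_mod_cast hk

lemma svalSet_bddBelow (k : ℕ) (A : H →L[ℂ] H) :
    BddBelow { r : ℝ | ∃ X : H →L[ℂ] H,
    Module.rank ℂ (LinearMap.range (X : H →ₗ[ℂ] H)) < (k : Cardinal) ∧ r = ‖A - X‖ } := by
  refine ⟨0, fun r hr => ?_⟩
  obtain ⟨X, _, rfl⟩ := hr
  positivity

lemma sval_nonneg (k : ℕ) (A : H →L[ℂ] H) : 0 ≤ sval k A := by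
  apply Real.sInf_nonneg
  rintro r ⟨X, _, rfl⟩
  positivity

lemma sval_le (k : ℕ) (A X : H →L[ℂ] H)
    (hX : Module.rank ℂ (LinearMap.range (X : H →ₗ[ℂ] H)) < (k : Cardinal)) :
    sval k A ≤ ‖A - X‖ :=
  csInf_le (svalSet_bddBelow k A) ⟨X, hX, rfl⟩

lemma sval_one (A : H →L[ℂ] H) : sval 1 A = ‖A‖ := by
  have hset : { r : ℝ | ∃ X : H →L[ℂ] H,
      Module.rank ℂ (LinearMap.range (X : H →ₗ[ℂ] H)) < ((1:ℕ) : Cardinal) ∧ r = ‖A - X‖ }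
      = {‖A‖} := by
    ext r
    simp only [Set.mem_setOf_eq, Set.mem_singleton_iff]
    constructor
    · rintro ⟨X, hX, rfl⟩
      have h0 : Module.rank ℂ (LinearMap.range (X : H →ₗ[ℂ] H)) = 0 := by
        have := hX
        rw [Nat.cast_one, Cardinal.lt_one_iff_zero] at this
        exact this
      have hbot : LinearMap.range (X : H →ₗ[ℂ] H) = ⊥ := by
        rwa [Submodule.rank_eq_zero] at h0
      have hX0 : X = 0 := by
        ext x
        have : (X : H →ₗ[ℂ] H) x ∈ (⊥ : Submodule ℂ H) := hbot ▸ LinearMap.mem_range_self _ x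
        simpa using this
      simp [hX0]
    · rintro rfl
      exact norm_mem_svalSet 1 one_pos A
  rw [svalSet_def]
  rw [show ((1:ℕ) : Cardinal) = ((1:ℕ) : Cardinal) from rfl] at hset
  rw [hset, csInf_singleton]

lemma sval_comp_le (k : ℕ) (hk : 0 < k) (A B : H →L[ℂ] H) :
    sval k (A ∘L B) ≤ ‖A‖ * sval k B := by
  have key : ∀ X : H →L[ℂ] H,
      Module.rank ℂ (LinearMap.range (X : H →ₗ[ℂ] H)) < (k : Cardinal) →
      sval k (A ∘L B) ≤ ‖A‖ * ‖B - X‖ := by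
    intro X hX
    have hrank : Module.rank ℂ (LinearMap.range ((A ∘L X : H →L[ℂ] H) : H →ₗ[ℂ] H))
        < (k : Cardinal) := by
      have hco : ((A ∘L X : H →L[ℂ] H) : H →ₗ[ℂ] H)
          = (A : H →ₗ[ℂ] H).comp (X : H →ₗ[ℂ] H) := rfl
      rw [hco, LinearMap.range_comp]
      exact lt_of_le_of_lt (rank_map_le _ _) hX
    calc sval k (A ∘L B) ≤ ‖A ∘L B - A ∘L X‖ := sval_le k _ _ hrank
      _ = ‖A ∘L (B - X)‖ := by rw [ContinuousLinearMap.comp_sub]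
      _ ≤ ‖A‖ * ‖B - X‖ := ContinuousLinearMap.opNorm_comp_le _ _
  rcases eq_or_lt_of_le (norm_nonneg A) with hA | hA
  · have hA0 : A = 0 := by simpa [eq_comm] using norm_le_zero_iff.mp hA.ge
    have : sval k (A ∘L B) ≤ 0 := by
      have h := key 0 (by
        have h2 : LinearMap.range ((0 : H →L[ℂ] H) : H →ₗ[ℂ] H) = ⊥ := by simp
        rw [h2, rank_bot]
        exact_mod_cast hk)
      simpa [hA0] using h
    have h2 : 0 ≤ ‖A‖ * sval k B := mul_nonneg (norm_nonneg A) (sval_nonneg k B)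
    linarith
  · rw [← div_le_iff₀' hA]
    apply le_csInf ⟨‖B‖, norm_mem_svalSet k hk B⟩
    rintro r ⟨X, hX, rfl⟩
    rw [div_le_iff₀' hA]
    exact key X hX

theorem stmt11 (n : ℕ) (hn : 0 < n) (hdim : (n : Cardinal) ≤ Module.rank ℂ H)
    (c : Fin n → ℝ) (hmono : ∀ i j : Fin n, i ≤ j → c j ≤ c i) (hpos : ∀ i, 0 < c i) :
    (∀ A B : H →L[ℂ] H, cnorm n c (A ∘L B) ≤ cnorm n c A * cnorm n c B) ↔
      1 ≤ c ⟨0, hn⟩ := by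
  constructor
  · intro hsub
    -- construct a unit vector
    have hnt : ∃ x : H, x ≠ 0 := by
      rw [← rank_pos_iff_exists_ne_zero (R := ℂ)]
      calc (0 : Cardinal) < (n : Cardinal) := by exact_mod_cast hn
        _ ≤ _ := hdim
    obtain ⟨x, hx⟩ := hnt
    set e : H := ‖x‖⁻¹ • x with he_def
    have he : ‖e‖ = 1 := norm_smul_inv_norm hx
    set P : H →L[ℂ] H := (innerSL ℂ e).smulRight e with hP_def
    have hPapp : ∀ y : H, P y = ⟪e, y⟫_ℂ • e := fun y => rfl
    have hee : ⟪e, e⟫_ℂ = 1 := by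
      rw [inner_self_eq_norm_sq_to_K, he]; norm_num
    have hPP : P ∘L P = P := by
      ext y
      simp only [ContinuousLinearMap.comp_apply, hPapp, inner_smul_right, hee, mul_one]
    have hPnorm : ‖P‖ = 1 := by
      rw [hP_def, ContinuousLinearMap.norm_smulRight_apply, innerSL_apply_norm, he, mul_one]
    have hrank : Module.rank ℂ (LinearMap.range (P : H →ₗ[ℂ] H)) ≤ 1 := by
      have hle : LinearMap.range (P : H →ₗ[ℂ] H) ≤ Submodule.span ℂ {e} := by
        rintro y ⟨z, rfl⟩
        exact Submodule.smul_mem _ _ (Submodule.mem_span_singleton_self e)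
      calc Module.rank ℂ (LinearMap.range (P : H →ₗ[ℂ] H))
          ≤ Module.rank ℂ (Submodule.span ℂ ({e} : Set H)) := Submodule.rank_mono hle
        _ ≤ Cardinal.mk ({e} : Set H) := rank_span_le _
        _ = 1 := Cardinal.mk_singleton e
    have hsvalP : ∀ j : Fin n, 1 ≤ j.1 → sval (j.1 + 1) P = 0 := by
      intro j hj
      refine le_antisymm ?_ (sval_nonneg _ _)
      have := sval_le (j.1 + 1) P P (by
        refine lt_of_le_of_lt hrank ?_
        have : (2 : Cardinal) ≤ ((j.1 + 1 : ℕ) : Cardinal) := by exact_mod_cast Nat.succ_le_succ hj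
        exact lt_of_lt_of_le (by norm_num) this)
      simpa using this
    have hcP : cnorm n c P = c ⟨0, hn⟩ := by
      rw [cnorm]
      rw [Finset.sum_eq_single ⟨0, hn⟩]
      · simp [sval_one, hPnorm]
      · intro j _ hj
        have hj1 : 1 ≤ j.1 := by
          rcases Nat.eq_zero_or_pos j.1 with h0 | h1
          · exact absurd (Fin.ext h0) hj
          · exact h1
        rw [hsvalP j hj1, mul_zero]
      · intro h; exact absurd (Finset.mem_univ _) h
    have := hsub P P
    rw [hPP, hcP] at this
    exact (le_mul_iff_one_le_left (hpos ⟨0, hn⟩)).mp this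
  · intro hc A B
    have hc0 : ∀ D : H →L[ℂ] H, ‖D‖ ≤ cnorm n c D := by
      intro D
      have h1 : ‖D‖ ≤ c ⟨0, hn⟩ * sval 1 D := by
        rw [sval_one]
        exact le_mul_of_one_le_left (norm_nonneg D) hc
      refine h1.trans ?_
      have : c ⟨0, hn⟩ * sval 1 D = c ⟨0, hn⟩ * sval ((⟨0, hn⟩ : Fin n).1 + 1) D := rfl
      rw [this, cnorm]
      exact Finset.single_le_sum (f := fun j : Fin n => c j * sval (j.1 + 1) D)
        (fun j _ => mul_nonneg (hpos j).le (sval_nonneg _ _)) (Finset.mem_univ _)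
    have hB_nonneg : 0 ≤ cnorm n c B :=
      Finset.sum_nonneg fun j _ => mul_nonneg (hpos j).le (sval_nonneg _ _)
    calc cnorm n c (A ∘L B)
        ≤ ∑ j : Fin n, c j * (‖A‖ * sval (j.1 + 1) B) := by
          refine Finset.sum_le_sum fun j _ => ?_
          exact mul_le_mul_of_nonneg_left (sval_comp_le _ (Nat.succ_pos _) A B) (hpos j).le
      _ = ‖A‖ * cnorm n c B := by
          rw [cnorm, Finset.mul_sum]; congr 1; ext j; ring
      _ ≤ cnorm n c A * cnorm n c B :=
          mul_le_mul_of_nonneg_right (hc0 A) hB_nonneg
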